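/- Let $x, y : [0, \infty) \to \mathbb{R}$ be continuous on $[0,\infty)$, continuously differentiable on $(0,\infty)$, both solving the scalar Caputo F-ODE $^{C}_{0}D^{\alpha}_{t} u(t) = f(u(t))$ for $0 < \alpha < 1$, where $f$ satisfies the one-sided Lipschitz condition $(f(u)-f(v))(u-v) \le \lambda (u-v)^2$ for all $u, v$ with $\lambda < 0$. If $x(0) > y(0)$, then $x(t) \ge y(t)$ for all $t > 0$. -/

import Mathlib

open Set

/-- The Caputo fractional derivative of order `α` of `u` at time `t`. -/
noncomputable def caputoDeriv (α : ℝ) (u : ℝ → ℝ) (t : ℝ) : ℝ :=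
  (1 / Real.Gamma (1 - α)) * ∫ τ in (0 : ℝ)..t, (t - τ) ^ (-α) * deriv u τ

/-!
If `x` fell below `y`, let `t₀` be the first zero of `z = x - y`, so that `z > 0` on `[0, t₀)`
and `z t₀ = 0`. Integrating by parts against the increasing kernel `(t₀ - τ) ^ (-α)` gives
`∫₀^t₀ (t₀ - τ) ^ (-α) z' τ ≤ -t₀ ^ (-α) z 0 < 0`, so the Caputo derivative of `x` at `t₀` is
strictly smaller than that of `y`; but both equal `f (x t₀) = f (y t₀)`.
-/

open MeasureTheory Filter Topology

theorem intervalIntegral.integral_le_sub_of_tendsto {g Φ : ℝ → ℝ} {a b la lb : ℝ} (hab : a < b)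
    (hg : IntervalIntegrable g volume a b) (ha : Tendsto Φ (𝓝[>] a) (𝓝 la))
    (hb : Tendsto Φ (𝓝[<] b) (𝓝 lb))
    (h : ∀ ε s, a < ε → ε ≤ s → s < b → ∫ τ in ε..s, g τ ≤ Φ s - Φ ε) :
    ∫ τ in a..b, g τ ≤ lb - la := by
  set P : ℝ → ℝ := fun s => ∫ τ in a..s, g τ
  have hP : ContinuousOn P (Icc a b) := by
    rw [← uIcc_of_le hab.le]
    refine intervalIntegral.continuousOn_primitive_interval ?_
    rw [uIcc_of_le hab.le]
    exact (intervalIntegrable_iff_integrableOn_Icc_of_le hab.le).mp hg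
  have hPa : Tendsto P (𝓝[>] a) (𝓝 0) := by
    simpa [P] using (hP a (left_mem_Icc.mpr hab.le)).tendsto.mono_left
      (nhdsWithin_le_of_mem (Icc_mem_nhdsGT hab))
  have hPb : Tendsto P (𝓝[<] b) (𝓝 (∫ τ in a..b, g τ)) :=
    (hP b (right_mem_Icc.mpr hab.le)).tendsto.mono_left
      (nhdsWithin_le_of_mem (Icc_mem_nhdsLT hab))
  set l := 𝓝[>] a ×ˢ 𝓝[<] b
  have hl : ∀ᶠ p in l, p.1 ∈ Ioo a ((a + b) / 2) ∧ p.2 ∈ Ioo ((a + b) / 2) b :=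
    (tendsto_fst.eventually (Ioo_mem_nhdsGT (by linarith))).and
      (tendsto_snd.eventually (Ioo_mem_nhdsLT (by linarith)))
  refine le_of_tendsto_of_tendsto (f := fun p : ℝ × ℝ => P p.2 - P p.1) (b := l)
    (by simpa using (hPb.comp tendsto_snd).sub (hPa.comp tendsto_fst))
    ((hb.comp tendsto_snd).sub (ha.comp tendsto_fst)) ?_
  filter_upwards [hl] with ⟨ε, s⟩ ⟨hε, hs⟩
  have hint : ∀ c ∈ Icc a b, IntervalIntegrable g volume a c := fun c hc =>
    hg.mono_set (by rw [uIcc_of_le hab.le, uIcc_of_le hc.1]; exact Icc_subset_Icc_right hc.2)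
  simp only [P, Function.comp]
  rw [intervalIntegral.integral_interval_sub_left (hint s ⟨by linarith [hs.1, hε.1], hs.2.le⟩)
    (hint ε ⟨hε.1.le, by linarith [hs.1, hε.2]⟩)]
  exact h ε s hε.1 (by linarith [hs.1, hε.2]) hs.2

theorem intervalIntegral.integral_mul_deriv_le_of_nonneg {k k' z z' : ℝ → ℝ} {a b : ℝ}
    (hab : a ≤ b) (hk : ∀ x ∈ Icc a b, HasDerivAt k (k' x) x)
    (hz : ∀ x ∈ Icc a b, HasDerivAt z (z' x) x) (hk' : IntervalIntegrable k' volume a b)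
    (hz' : IntervalIntegrable z' volume a b) (hk'_nonneg : ∀ x ∈ Icc a b, 0 ≤ k' x)
    (hz_nonneg : ∀ x ∈ Icc a b, 0 ≤ z x) :
    ∫ x in a..b, k x * z' x ≤ k b * z b - k a * z a := by
  rw [intervalIntegral.integral_mul_deriv_eq_deriv_mul (fun x hx => hk x (uIcc_of_le hab ▸ hx))
    (fun x hx => hz x (uIcc_of_le hab ▸ hx)) hk' hz']
  have := intervalIntegral.integral_nonneg (μ := volume) hab
    fun x hx => mul_nonneg (hk'_nonneg x hx) (hz_nonneg x hx)
  linarith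

theorem exists_first_zero_of_pos_of_nonpos {z : ℝ → ℝ} {a b : ℝ} (hab : a ≤ b)
    (hz : ContinuousOn z (Icc a b)) (ha : 0 < z a) (hb : z b ≤ 0) :
    ∃ c ∈ Ioc a b, z c = 0 ∧ ∀ x ∈ Ico a c, 0 < z x := by
  set S := Icc a b ∩ z ⁻¹' Iic 0
  have hS : IsClosed S := hz.preimage_isClosed_of_isClosed isClosed_Icc isClosed_Iic
  have hSbdd : BddBelow S := ⟨a, fun x hx => hx.1.1⟩
  obtain ⟨⟨hac, hcb⟩, hc⟩ : sInf S ∈ S := hS.csInf_mem ⟨b, ⟨hab, le_rfl⟩, hb⟩ hSbdd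
  have hpos : ∀ x ∈ Ico a (sInf S), 0 < z x := fun x hx => by
    by_contra! hx0
    exact (csInf_le hSbdd ⟨⟨hx.1, hx.2.le.trans hcb⟩, hx0⟩).not_gt hx.2
  have hac' : a < sInf S := hac.lt_of_ne fun h => (h ▸ ha).not_ge hc
  refine ⟨sInf S, ⟨hac', hcb⟩, hc.antisymm ?_, hpos⟩
  by_contra! hneg
  obtain ⟨x, hx, hx0⟩ := intermediate_value_Icc' hac (hz.mono (Icc_subset_Icc_right hcb))
    ⟨hneg.le, ha.le⟩
  rcases hx.2.lt_or_eq with hlt | rfl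
  · exact (hpos x ⟨hx.1, hlt⟩).ne' hx0
  · exact hneg.ne hx0

theorem intervalIntegrable_mul_iff_of_continuousOn {k w : ℝ → ℝ} {a b : ℝ}
    (hk : ContinuousOn k (uIcc a b)) (hk0 : ∀ x ∈ uIcc a b, k x ≠ 0) :
    IntervalIntegrable (fun x => k x * w x) volume a b ↔ IntervalIntegrable w volume a b :=
  ⟨fun h => (h.continuousOn_mul (hk.inv₀ hk0)).congr fun x hx => by
      simp [inv_mul_cancel_left₀ (hk0 x (uIoc_subset_uIcc hx))],
    fun h => h.continuousOn_mul hk⟩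

theorem intervalIntegrable_iff_of_continuousOn_Ioi {w : ℝ → ℝ} {a s t : ℝ}
    (hw : ContinuousOn w (Ioi a)) (hs : a < s) (ht : a < t) :
    IntervalIntegrable w volume a s ↔ IntervalIntegrable w volume a t := by
  have hst : IntervalIntegrable w volume s t :=
    (hw.mono fun x hx => (lt_min hs ht).trans_le hx.1).intervalIntegrable
  exact ⟨fun h => h.trans hst, fun h => h.trans hst.symm⟩

section Kernel

variable {α t : ℝ}

theorem intervalIntegrable_rpow_sub (hα : α < 1) (a : ℝ) :
    IntervalIntegrable (fun τ => (t - τ) ^ (-α)) volume a t := by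
  simpa using (intervalIntegral.intervalIntegrable_rpow' (by linarith : (-1 : ℝ) < -α)
    (a := t - a) (b := t - t)).comp_sub_left t

theorem hasDerivAt_rpow_sub {τ : ℝ} (hτ : τ < t) :
    HasDerivAt (fun τ => (t - τ) ^ (-α)) (α * (t - τ) ^ (-α - 1)) τ :=
  (((hasDerivAt_id τ).const_sub t).rpow_const (Or.inl (sub_ne_zero.mpr hτ.ne'))).congr_deriv
    (by simp)

theorem intervalIntegrable_rpow_sub_mul_iff {w : ℝ → ℝ} (hα : α < 1) (ht : 0 < t)
    (hw : ContinuousOn w (Ioi 0)) :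
    IntervalIntegrable (fun τ => (t - τ) ^ (-α) * w τ) volume 0 t ↔
      IntervalIntegrable w volume 0 t := by
  have hmid : t / 2 ∈ uIcc 0 t := by rw [uIcc_of_le ht.le]; constructor <;> linarith
  have hw_right : ContinuousOn w (uIcc (t / 2) t) := hw.mono fun x hx => by
    rw [uIcc_of_le (by linarith : t / 2 ≤ t)] at hx; exact lt_of_lt_of_le (by linarith) hx.1
  have hk_left : ∀ τ ∈ uIcc 0 (t / 2), 0 < t - τ := fun τ hτ => by
    rw [uIcc_of_le (by linarith : 0 ≤ t / 2)] at hτ; linarith [hτ.2]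
  have hk_cont : ContinuousOn (fun τ => (t - τ) ^ (-α)) (uIcc 0 (t / 2)) :=
    (continuousOn_const.sub continuousOn_id).rpow_const fun τ hτ => Or.inl (hk_left τ hτ).ne'
  rw [IntervalIntegrable.trans_iff hmid, IntervalIntegrable.trans_iff hmid,
    intervalIntegrable_mul_iff_of_continuousOn hk_cont
      fun τ hτ => (Real.rpow_pos_of_pos (hk_left τ hτ) _).ne']
  exact and_congr_right fun _ => iff_of_true
    ((intervalIntegrable_rpow_sub hα _).mul_continuousOn hw_right) hw_right.intervalIntegrable

theorem tendsto_rpow_sub_mul_nhdsLT {z : ℝ → ℝ} {z' : ℝ} (hα : α < 1) (hz : HasDerivAt z z' t)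
    (hzt : z t = 0) : Tendsto (fun s => (t - s) ^ (-α) * z s) (𝓝[<] t) (𝓝 0) := by
  have hpow : Tendsto (fun s => (t - s) ^ (1 - α)) (𝓝[<] t) (𝓝 0) := by
    have := ((continuous_const.sub continuous_id : Continuous fun s : ℝ => t - s).rpow_const
      fun _ => Or.inr (by linarith : (0 : ℝ) ≤ 1 - α)).tendsto t
    simpa [Real.zero_rpow (by linarith : (1 : ℝ) - α ≠ 0)] using this.mono_left nhdsWithin_le_nhds
  have hslope := (hasDerivAt_iff_tendsto_slope.mp hz).mono_left
    (nhdsWithin_mono t fun s hs => ne_of_lt hs)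
  refine ((hpow.mul hslope).neg.congr' ?_).trans_eq (by simp)
  filter_upwards [self_mem_nhdsWithin] with s hs
  have hts : 0 < t - s := sub_pos.mpr hs
  have hst : s - t ≠ 0 := sub_ne_zero.mpr hs.ne
  rw [slope_def_field, hzt, sub_zero, show 1 - α = -α + 1 by ring, Real.rpow_add hts,
    Real.rpow_one]
  field_simp
  ring

end Kernel

theorem integral_rpow_sub_mul_neg_of_first_zero {α t : ℝ} {z z' : ℝ → ℝ} (hα0 : 0 ≤ α)
    (hα1 : α < 1) (ht : 0 < t) (hz : ContinuousOn z (Icc 0 t))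
    (hderiv : ∀ τ ∈ Ioc 0 t, HasDerivAt z (z' τ) τ) (hz' : ContinuousOn z' (Ioo 0 t))
    (hint : IntervalIntegrable (fun τ => (t - τ) ^ (-α) * z' τ) volume 0 t)
    (hz0 : 0 < z 0) (hnonneg : ∀ τ ∈ Ico 0 t, 0 ≤ z τ) (hzt : z t = 0) :
    ∫ τ in (0 : ℝ)..t, (t - τ) ^ (-α) * z' τ < 0 := by
  set Φ : ℝ → ℝ := fun τ => (t - τ) ^ (-α) * z τ
  have hΦ0 : Tendsto Φ (𝓝[>] 0) (𝓝 (t ^ (-α) * z 0)) := by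
    have hk : ContinuousAt (fun τ => (t - τ) ^ (-α)) 0 :=
      (continuousAt_const.sub continuousAt_id).rpow_const (Or.inl (by simpa using ht.ne'))
    simpa using (hk.tendsto.mono_left nhdsWithin_le_nhds).mul
      ((hz 0 ⟨le_rfl, ht.le⟩).tendsto.mono_left (nhdsWithin_le_of_mem (Icc_mem_nhdsGT ht)))
  have hΦt : Tendsto Φ (𝓝[<] t) (𝓝 0) :=
    tendsto_rpow_sub_mul_nhdsLT hα1 (hderiv t ⟨ht, le_rfl⟩) hzt
  have hparts : ∀ ε s, 0 < ε → ε ≤ s → s < t →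
      ∫ τ in ε..s, (t - τ) ^ (-α) * z' τ ≤ Φ s - Φ ε := fun ε s hε hεs hst => by
    have hsub : Icc ε s ⊆ Ioo 0 t := fun τ hτ => ⟨hε.trans_le hτ.1, hτ.2.trans_lt hst⟩
    have hk'_cont : ContinuousOn (fun τ => α * (t - τ) ^ (-α - 1)) (Icc ε s) :=
      continuousOn_const.mul ((continuousOn_const.sub continuousOn_id).rpow_const
        fun τ hτ => Or.inl (sub_ne_zero.mpr (hsub hτ).2.ne'))
    exact intervalIntegral.integral_mul_deriv_le_of_nonneg hεs
      (fun τ hτ => hasDerivAt_rpow_sub (hsub hτ).2)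
      (fun τ hτ => hderiv τ ⟨(hsub hτ).1, (hsub hτ).2.le⟩)
      (hk'_cont.intervalIntegrable_of_Icc hεs) ((hz'.mono hsub).intervalIntegrable_of_Icc hεs)
      (fun τ hτ => mul_nonneg hα0 (Real.rpow_nonneg (sub_pos.mpr (hsub hτ).2).le _))
      (fun τ hτ => hnonneg τ ⟨(hsub hτ).1.le, (hsub hτ).2⟩)
  have := intervalIntegral.integral_le_sub_of_tendsto ht hint hΦ0 hΦt hparts
  have : 0 < t ^ (-α) * z 0 := mul_pos (Real.rpow_pos_of_pos ht _) hz0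
  linarith

theorem injective_of_sub_mul_sub_le_neg_mul_sq {f : ℝ → ℝ} {lam : ℝ} (hlam : lam < 0)
    (hf : ∀ u v : ℝ, (f u - f v) * (u - v) ≤ lam * (u - v) ^ 2) : Function.Injective f := by
  intro u v huv
  have h := hf u v
  rw [huv, sub_self, zero_mul] at h
  have : (u - v) ^ 2 = 0 := by nlinarith [sq_nonneg (u - v)]
  exact sub_eq_zero.mp (pow_eq_zero_iff two_ne_zero |>.mp this)

/-- A solution cannot have a non-integrable derivative: the Caputo integral would then be
undefined (hence `0`) at every time, forcing `f ∘ u = 0` and, by injectivity, `u` constant. -/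
theorem intervalIntegrable_deriv_of_caputoDeriv_eq {α t : ℝ} {f u : ℝ → ℝ} (hα : α < 1)
    (hf : Function.Injective f) (hu' : ContinuousOn (deriv u) (Ioi 0))
    (hode : ∀ t : ℝ, 0 < t → caputoDeriv α u t = f (u t)) (ht : 0 < t) :
    IntervalIntegrable (deriv u) volume 0 t := by
  by_contra hnot
  have hzero : ∀ s, 0 < s → f (u s) = 0 := fun s hs => by
    rw [← hode s hs, caputoDeriv, intervalIntegral.integral_undef, mul_zero]
    rwa [intervalIntegrable_rpow_sub_mul_iff hα hs hu',
      intervalIntegrable_iff_of_continuousOn_Ioi hu' hs ht]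
  have hderiv : ∀ s ∈ Ioi (0 : ℝ), deriv u s = 0 := fun s hs => by
    have hconst : u =ᶠ[𝓝 s] fun _ => u t := by
      filter_upwards [isOpen_Ioi.mem_nhds hs] with r hr
      exact hf (by rw [hzero r hr, hzero t ht])
    rw [hconst.deriv_eq, deriv_const]
  refine hnot (intervalIntegrable_const (c := (0 : ℝ)).congr fun s hs => ?_)
  rw [uIoc_of_le ht.le] at hs
  exact (hderiv s hs.1).symm

theorem caputoDeriv_sub_caputoDeriv {α t : ℝ} {x y : ℝ → ℝ}
    (hx : IntervalIntegrable (fun τ => (t - τ) ^ (-α) * deriv x τ) volume 0 t)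
    (hy : IntervalIntegrable (fun τ => (t - τ) ^ (-α) * deriv y τ) volume 0 t) :
    caputoDeriv α x t - caputoDeriv α y t =
      (1 / Real.Gamma (1 - α)) * ∫ τ in (0 : ℝ)..t, (t - τ) ^ (-α) * (deriv x τ - deriv y τ) := by
  simp only [caputoDeriv, mul_sub, intervalIntegral.integral_sub hx hy]

theorem caputo_fode_comparison (α : ℝ) (hα0 : 0 < α) (hα1 : α < 1)
    (f : ℝ → ℝ) (lam : ℝ) (hlam : lam < 0)
    (hf : ∀ u v : ℝ, (f u - f v) * (u - v) ≤ lam * (u - v) ^ 2)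
    (x y : ℝ → ℝ)
    (hxcont : ContinuousOn x (Ici 0)) (hycont : ContinuousOn y (Ici 0))
    (hxdiff : ∀ t ∈ Ioi (0 : ℝ), DifferentiableAt ℝ x t)
    (hydiff : ∀ t ∈ Ioi (0 : ℝ), DifferentiableAt ℝ y t)
    (hxderiv_cont : ContinuousOn (deriv x) (Ioi 0))
    (hyderiv_cont : ContinuousOn (deriv y) (Ioi 0))
    (hxode : ∀ t : ℝ, 0 < t → caputoDeriv α x t = f (x t))
    (hyode : ∀ t : ℝ, 0 < t → caputoDeriv α y t = f (y t))
    (h0 : y 0 < x 0) :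
    ∀ t : ℝ, 0 < t → y t ≤ x t := by
  intro t ht
  by_contra! hlt
  have hz : ContinuousOn (fun s => x s - y s) (Ici 0) := hxcont.sub hycont
  obtain ⟨t₀, ⟨ht₀, -⟩, hzero, hpos⟩ := exists_first_zero_of_pos_of_nonpos ht.le
    (hz.mono Icc_subset_Ici_self) (sub_pos.mpr h0) (sub_nonpos.mpr hlt.le)
  have hinj := injective_of_sub_mul_sub_le_neg_mul_sq hlam hf
  have hix := (intervalIntegrable_rpow_sub_mul_iff hα1 ht₀ hxderiv_cont).mpr
    (intervalIntegrable_deriv_of_caputoDeriv_eq hα1 hinj hxderiv_cont hxode ht₀)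
  have hiy := (intervalIntegrable_rpow_sub_mul_iff hα1 ht₀ hyderiv_cont).mpr
    (intervalIntegrable_deriv_of_caputoDeriv_eq hα1 hinj hyderiv_cont hyode ht₀)
  have hneg := integral_rpow_sub_mul_neg_of_first_zero hα0.le hα1 ht₀
    (hz.mono Icc_subset_Ici_self)
    (fun τ hτ => (hxdiff τ hτ.1).hasDerivAt.sub (hydiff τ hτ.1).hasDerivAt)
    ((hxderiv_cont.sub hyderiv_cont).mono Ioo_subset_Ioi_self)
    (by simpa only [mul_sub] using hix.sub hiy) (sub_pos.mpr h0)
    (fun τ hτ => (hpos τ hτ).le) hzero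
  have hΓ : 0 < 1 / Real.Gamma (1 - α) := one_div_pos.mpr (Real.Gamma_pos_of_pos (by linarith))
  have hcomp := caputoDeriv_sub_caputoDeriv hix hiy
  rw [hxode t₀ ht₀, hyode t₀ ht₀, sub_eq_zero.mp hzero, sub_self] at hcomp
  exact (mul_neg_of_pos_of_neg hΓ hneg).ne hcomp.symm
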